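/- If p : E → X and q : X → Y are both rigid fibrations, then the composition q ∘ p : E → Y is a rigid fibration. -/

import Mathlib

open Topology unitInterval

universe u v

/-- Hurewicz fibration: the homotopy lifting property with respect to all spaces. -/
def IsHurewiczFibration {E X : Type u} [TopologicalSpace E] [TopologicalSpace X]
    (p : C(E, X)) : Prop :=
  ∀ (Y : Type u) [TopologicalSpace Y] (H : C(Y × I, X)) (h₀ : C(Y, E)),
    (∀ y, p (h₀ y) = H (y, 0)) →
    ∃ H' : C(Y × I, E), (∀ z, p (H' z) = H z) ∧ ∀ y, H' (y, 0) = h₀ y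

/-- A subset has no nonconstant paths if every path into it is constant. -/
def NoNonconstantPathsIn {E : Type u} [TopologicalSpace E] (A : Set E) : Prop :=
  ∀ γ : C(I, E), (∀ t, γ t ∈ A) → ∀ t, γ t = γ 0

/-- A rigid (covering) fibration: a Hurewicz fibration each of whose fibers has
no nonconstant paths. -/
def IsRigidFibration {E X : Type u} [TopologicalSpace E] [TopologicalSpace X]
    (p : C(E, X)) : Prop :=
  IsHurewiczFibration p ∧ ∀ x : X, NoNonconstantPathsIn (p ⁻¹' {x})

/-- Unique path lifting: two paths with the same projection and starting point agree. -/
def UniquePathLifting {E X : Type u} [TopologicalSpace E] [TopologicalSpace X]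
    (p : C(E, X)) : Prop :=
  ∀ γ₁ γ₂ : C(I, E), (∀ t, p (γ₁ t) = p (γ₂ t)) → γ₁ 0 = γ₂ 0 → γ₁ = γ₂

theorem IsHurewiczFibration.comp {E X Y : Type u} [TopologicalSpace E] [TopologicalSpace X]
    [TopologicalSpace Y] {p : C(E, X)} {q : C(X, Y)}
    (hp : IsHurewiczFibration p) (hq : IsHurewiczFibration q) :
    IsHurewiczFibration (q.comp p) := by
  intro Z _ H h₀ hh₀
  obtain ⟨H₁, hH₁, hH₁₀⟩ := hq Z H (p.comp h₀) hh₀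
  obtain ⟨H₂, hH₂, hH₂₀⟩ := hp Z H₁ h₀ fun z => (hH₁₀ z).symm
  exact ⟨H₂, fun z => by rw [ContinuousMap.comp_apply, hH₂, hH₁], hH₂₀⟩

theorem NoNonconstantPathsIn.preimage {E X : Type u} [TopologicalSpace E] [TopologicalSpace X]
    {p : C(E, X)} (hp : ∀ x, NoNonconstantPathsIn (p ⁻¹' {x})) {A : Set X}
    (hA : NoNonconstantPathsIn A) : NoNonconstantPathsIn (p ⁻¹' A) := by
  intro γ hγ
  have hpγ : ∀ t, p (γ t) = p (γ 0) := hA (p.comp γ) hγ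
  exact hp (p (γ 0)) γ hpγ

theorem IsRigidFibration.comp {E X Y : Type u} [TopologicalSpace E] [TopologicalSpace X]
    [TopologicalSpace Y] {p : C(E, X)} {q : C(X, Y)}
    (hp : IsRigidFibration p) (hq : IsRigidFibration q) :
    IsRigidFibration (q.comp p) :=
  ⟨hp.1.comp hq.1, fun y => (hq.2 y).preimage hp.2⟩

/-- The composition of rigid fibrations is a rigid fibration. -/
theorem stmt3 {E X Y : Type u} [TopologicalSpace E] [TopologicalSpace X]
    [TopologicalSpace Y] (p : C(E, X)) (q : C(X, Y))
    (hp : IsRigidFibration p) (hq : IsRigidFibration q) :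
    IsRigidFibration (q.comp p) :=
  hp.comp hq
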